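/- arXiv:2212.06553 — 3 statements merged into one kernel-verified Lean document; each statement's English description precedes it below -/
import Mathlib

section
/- Let k be a real number and let P(u,v,w) = k − u − u^{-1} − v − v^{-1} − w − w^{-1} be the Newton polynomial of ℙ¹×ℙ¹×ℙ¹. For (x,y,z) ∈ ℝ³: (i) if 2·cosh x + 2·cosh y + 2·cosh z < |k| then (x,y,z) does not belong to the amoeba of P; (ii) if k ≠ 0 and 2·cosh x + 2·cosh y + 2·cosh z = |k| then (x,y,z) belongs to the amoeba of P. Consequently, for |k| > 6 the set {(x,y,z) : 2·cosh x + 2·cosh y + 2·cosh z < |k|} is a nonempty bounded complement component (3-dimensional cavity) of the amoeba, bounded by the surfaces x = ln| |k|/2 − cosh y − cosh z ± √((|k|/2 − cosh y − cosh z)² − 1) |. -/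
/-! Write `S(x,y,z) = 2 cosh x + 2 cosh y + 2 cosh z`. On a zero of `P`,
`k = (u + u⁻¹) + (v + v⁻¹) + (w + w⁻¹)`, so the triangle inequality gives
`|k| ≤ (‖u‖ + ‖u‖⁻¹) + ⋯ = S(log ‖u‖, log ‖v‖, log ‖w‖)`. Conversely, if `S(x,y,z) = |k|` then
`(eˣ, eʸ, eᶻ)` is a zero of `P` with `|k|` in place of `k`, and `(u, v, w) ↦ (-u, -v, -w)` turns
zeros for `-k` into zeros for `k`. Hence the complement of the amoeba contains `{S < |k|}` and lies
in `{S < |k|} ∪ {S > |k|}`; both sets are open and the first is convex, so it is a connected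
component. As `S` is convex and `S(0) = 6 < |k|`, the frontier of `{S < |k|}` is `{S = |k|}`, on
which `|k|/2 - cosh y - cosh z = cosh x`, and `cosh x ± |sinh x| = e^{± x}`. -/

/-- The amoeba of the `ℙ¹×ℙ¹×ℙ¹` Newton polynomial
`P(u,v,w) = k - u - u⁻¹ - v - v⁻¹ - w - w⁻¹`. -/
def amoebaP1P1P1 (k : ℝ) : Set (ℝ × ℝ × ℝ) :=
  {p | ∃ u v w : ℂ, u ≠ 0 ∧ v ≠ 0 ∧ w ≠ 0 ∧
    (k : ℂ) - u - u⁻¹ - v - v⁻¹ - w - w⁻¹ = 0 ∧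
    Real.log ‖u‖ = p.1 ∧ Real.log ‖v‖ = p.2.1 ∧
    Real.log ‖w‖ = p.2.2}

/-- The candidate cavity `{(x,y,z) : 2 cosh x + 2 cosh y + 2 cosh z < |k|}`. -/
def holeP1P1P1 (k : ℝ) : Set (ℝ × ℝ × ℝ) :=
  {p | 2 * Real.cosh p.1 + 2 * Real.cosh p.2.1 + 2 * Real.cosh p.2.2 < |k|}

open Real Set

lemma Real.convexOn_cosh : ConvexOn ℝ univ cosh := by
  have h : ConvexOn ℝ univ (fun x => exp x + exp (-x)) :=
    convexOn_exp.add (convexOn_exp.comp_linearMap (-LinearMap.id))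
  have hcosh : cosh = fun x => (1 / 2 : ℝ) • (exp x + exp (-x)) := by
    funext x
    rw [cosh_eq, smul_eq_mul]
    ring
  exact hcosh ▸ h.smul (by norm_num)

lemma Real.abs_lt_two_mul_cosh (t : ℝ) : |t| < 2 * cosh t :=
  calc |t| < exp |t| := by linarith [add_one_le_exp |t|]
    _ < exp |t| + exp (-|t|) := lt_add_of_pos_right _ (exp_pos _)
    _ = 2 * cosh t := by rw [← cosh_abs, cosh_eq]; ring

lemma Real.exists_eq_log_abs_cosh_add_sqrt (x : ℝ) :
    ∃ ε : ℝ, (ε = 1 ∨ ε = -1) ∧ x = log |cosh x + ε * √(cosh x ^ 2 - 1)| := by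
  have hsqrt : √(cosh x ^ 2 - 1) = |sinh x| := by
    rw [cosh_sq', add_sub_cancel_left, sqrt_sq_eq_abs]
  obtain ⟨ε, hε, hεsinh⟩ : ∃ ε : ℝ, (ε = 1 ∨ ε = -1) ∧ ε * |sinh x| = sinh x := by
    rcases abs_choice (sinh x) with h | h
    · exact ⟨1, Or.inl rfl, by rw [h, one_mul]⟩
    · exact ⟨-1, Or.inr rfl, by rw [h, neg_one_mul, neg_neg]⟩
  refine ⟨ε, hε, ?_⟩
  rw [hsqrt, hεsinh, cosh_add_sinh, abs_of_pos (exp_pos x), log_exp]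

lemma norm_add_inv_le_two_mul_cosh_log_norm {𝕜 : Type*} [NormedDivisionRing 𝕜] {z : 𝕜}
    (hz : z ≠ 0) : ‖z + z⁻¹‖ ≤ 2 * cosh (log ‖z‖) :=
  calc ‖z + z⁻¹‖ ≤ ‖z‖ + ‖z‖⁻¹ := by simpa only [norm_inv] using norm_add_le z z⁻¹
    _ = 2 * cosh (log ‖z‖) := by
      rw [cosh_eq, exp_neg, exp_log (norm_pos_iff.2 hz)]
      ring

lemma ConvexOn.frontier_setOf_lt {E : Type*} [AddCommGroup E] [Module ℝ E] [TopologicalSpace E]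
    [ContinuousAdd E] [ContinuousSMul ℝ E] {f : E → ℝ} (hf : ConvexOn ℝ univ f)
    (hfc : Continuous f) {x₀ : E} {c : ℝ} (h₀ : f x₀ < c) :
    frontier {x | f x < c} = {x | f x = c} := by
  refine (frontier_lt_subset_eq hfc continuous_const).antisymm fun y (hy : f y = c) => ?_
  have hseg : openSegment ℝ x₀ y ⊆ {x | f x < c} := fun z hz => by
    rcases le_or_gt (f z) (f x₀) with h | h
    · exact h.trans_lt h₀
    · exact hy ▸ hf.lt_right_of_left_lt trivial trivial hz h
  rw [(isOpen_lt hfc continuous_const).frontier_eq]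
  exact ⟨closure_mono hseg (segment_subset_closure_openSegment (right_mem_segment ℝ x₀ y)),
    fun h => (show f y < c from h).ne hy⟩

lemma connectedComponentIn_eq_of_subset_union {X : Type*} [TopologicalSpace X]
    {S U V : Set X} {x : X} (hU : IsOpen U) (hUc : IsPreconnected U) (hV : IsOpen V)
    (hUV : Disjoint U V) (hUS : U ⊆ S) (hSUV : S ⊆ U ∪ V) (hx : x ∈ U) :
    connectedComponentIn S x = U :=
  (isPreconnected_connectedComponentIn.subset_left_of_subset_union hU hV hUV
      ((connectedComponentIn_subset S x).trans hSUV)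
      ⟨x, mem_connectedComponentIn (hUS hx), hx⟩).antisymm
    (hUc.subset_connectedComponentIn hx hUS)

noncomputable def coshSum (p : ℝ × ℝ × ℝ) : ℝ := 2 * cosh p.1 + 2 * cosh p.2.1 + 2 * cosh p.2.2

lemma continuous_coshSum : Continuous coshSum := by
  unfold coshSum
  fun_prop

lemma convexOn_coshSum : ConvexOn ℝ univ coshSum := by
  have h (g : ℝ × ℝ × ℝ →ₗ[ℝ] ℝ) : ConvexOn ℝ univ fun p => 2 * cosh (g p) :=
    (convexOn_cosh.comp_linearMap g).smul zero_le_two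
  exact ((h (LinearMap.fst ℝ ℝ _)).add (h (LinearMap.fst ℝ ℝ ℝ ∘ₗ LinearMap.snd ℝ ℝ _))).add
    (h (LinearMap.snd ℝ ℝ ℝ ∘ₗ LinearMap.snd ℝ ℝ _))

lemma coshSum_zero : coshSum 0 = 6 := by norm_num [coshSum]

lemma amoebaP1P1P1_neg (k : ℝ) : amoebaP1P1P1 (-k) = amoebaP1P1P1 k := by
  have h (k : ℝ) : amoebaP1P1P1 k ⊆ amoebaP1P1P1 (-k) := by
    rintro p ⟨u, v, w, hu, hv, hw, hP, hx, hy, hz⟩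
    refine ⟨-u, -v, -w, neg_ne_zero.2 hu, neg_ne_zero.2 hv, neg_ne_zero.2 hw, ?_,
      by rwa [norm_neg], by rwa [norm_neg], by rwa [norm_neg]⟩
    rw [inv_neg, inv_neg, inv_neg]
    push_cast
    linear_combination -hP
  have h' := h (-k)
  rw [neg_neg] at h'
  exact h'.antisymm (h k)

lemma amoebaP1P1P1_abs (k : ℝ) : amoebaP1P1P1 |k| = amoebaP1P1P1 k := by
  rcases abs_choice k with h | h <;> rw [h]
  exact amoebaP1P1P1_neg k

lemma abs_le_coshSum_of_mem_amoebaP1P1P1 {k : ℝ} {p : ℝ × ℝ × ℝ}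
    (hp : p ∈ amoebaP1P1P1 k) : |k| ≤ coshSum p := by
  obtain ⟨u, v, w, hu, hv, hw, hP, hx, hy, hz⟩ := hp
  have hk : (k : ℂ) = (u + u⁻¹) + (v + v⁻¹) + (w + w⁻¹) := by linear_combination hP
  calc |k| = ‖(k : ℂ)‖ := (Complex.norm_real k).symm
    _ ≤ ‖u + u⁻¹‖ + ‖v + v⁻¹‖ + ‖w + w⁻¹‖ := hk ▸ norm_add₃_le
    _ ≤ coshSum p := by
      rw [coshSum, ← hx, ← hy, ← hz]
      gcongr <;> exact norm_add_inv_le_two_mul_cosh_log_norm ‹_›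

lemma mem_amoebaP1P1P1_of_coshSum_eq {k : ℝ} {p : ℝ × ℝ × ℝ} (hp : coshSum p = |k|) :
    p ∈ amoebaP1P1P1 k := by
  rw [← amoebaP1P1P1_abs]
  refine ⟨(exp p.1 : ℝ), (exp p.2.1 : ℝ), (exp p.2.2 : ℝ), by simp, by simp, by simp, ?_,
    by simp, by simp, by simp⟩
  have hreal : |k| - exp p.1 - (exp p.1)⁻¹ - exp p.2.1 - (exp p.2.1)⁻¹ - exp p.2.2
      - (exp p.2.2)⁻¹ = 0 := by
    rw [← hp, coshSum, cosh_eq, cosh_eq, cosh_eq, exp_neg, exp_neg, exp_neg]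
    ring
  exact_mod_cast hreal

lemma isBounded_holeP1P1P1 (k : ℝ) : Bornology.IsBounded (holeP1P1P1 k) := by
  refine (Metric.isBounded_ball (x := 0) (r := |k|)).subset fun p (hp : coshSum p < |k|) => ?_
  have := abs_lt_two_mul_cosh p.1
  have := abs_lt_two_mul_cosh p.2.1
  have := abs_lt_two_mul_cosh p.2.2
  have := one_le_cosh p.1
  have := one_le_cosh p.2.1
  have := one_le_cosh p.2.2
  rw [coshSum] at hp
  rw [mem_ball_zero_iff, Prod.norm_def, Prod.norm_def, norm_eq_abs, norm_eq_abs, norm_eq_abs]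
  exact max_lt (by linarith) (max_lt (by linarith) (by linarith))

lemma convex_holeP1P1P1 (k : ℝ) : Convex ℝ (holeP1P1P1 k) := by
  have h := convexOn_coshSum.convex_lt |k|
  simp only [mem_univ, true_and] at h
  exact h

lemma connectedComponentIn_compl_amoebaP1P1P1 {k : ℝ} {p : ℝ × ℝ × ℝ}
    (hp : p ∈ holeP1P1P1 k) : connectedComponentIn (amoebaP1P1P1 k)ᶜ p = holeP1P1P1 k := by
  refine connectedComponentIn_eq_of_subset_union (isOpen_lt continuous_coshSum continuous_const)
    (convex_holeP1P1P1 k).isPreconnected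
    (isOpen_lt continuous_const continuous_coshSum : IsOpen {q | |k| < coshSum q}) ?_ ?_ ?_ hp
  · exact disjoint_left.2 fun q (h : coshSum q < |k|) (h' : |k| < coshSum q) => h.not_gt h'
  · exact fun q (hq : coshSum q < |k|) hq' =>
      (abs_le_coshSum_of_mem_amoebaP1P1P1 hq').not_gt hq
  · exact fun q hq => lt_or_gt_of_ne fun h => hq (mem_amoebaP1P1P1_of_coshSum_eq h)

/-- For `P(u,v,w) = k - u - u⁻¹ - v - v⁻¹ - w - w⁻¹`:
(i) points with `2 cosh x + 2 cosh y + 2 cosh z < |k|` are not in the amoeba;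
(ii) if `k ≠ 0`, points with `2 cosh x + 2 cosh y + 2 cosh z = |k|` are in the amoeba;
and for `|k| > 6` the set `{2 cosh x + 2 cosh y + 2 cosh z < |k|}` is a nonempty bounded
complement component (3-dimensional cavity) of the amoeba, bounded by the surfaces
`x = ln ||k|/2 − cosh y − cosh z ± √((|k|/2 − cosh y − cosh z)² − 1)|`. -/
theorem amoeba_hole_P1P1P1 (k : ℝ) :
    (∀ x y z : ℝ, 2 * Real.cosh x + 2 * Real.cosh y + 2 * Real.cosh z < |k| →
      (x, y, z) ∉ amoebaP1P1P1 k) ∧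
    (k ≠ 0 → ∀ x y z : ℝ, 2 * Real.cosh x + 2 * Real.cosh y + 2 * Real.cosh z = |k| →
      (x, y, z) ∈ amoebaP1P1P1 k) ∧
    (6 < |k| →
      (holeP1P1P1 k).Nonempty ∧
      Bornology.IsBounded (holeP1P1P1 k) ∧
      (∀ p ∈ holeP1P1P1 k, connectedComponentIn (amoebaP1P1P1 k)ᶜ p = holeP1P1P1 k) ∧
      frontier (holeP1P1P1 k) =
        {p : ℝ × ℝ × ℝ |
          2 * Real.cosh p.1 + 2 * Real.cosh p.2.1 + 2 * Real.cosh p.2.2 = |k|} ∧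
      ∀ p ∈ frontier (holeP1P1P1 k), ∃ ε : ℝ, (ε = 1 ∨ ε = -1) ∧
        p.1 = Real.log |(|k| / 2 - Real.cosh p.2.1 - Real.cosh p.2.2) +
          ε * Real.sqrt ((|k| / 2 - Real.cosh p.2.1 - Real.cosh p.2.2) ^ 2 - 1)|) := by
  refine ⟨fun x y z h hp => (abs_le_coshSum_of_mem_amoebaP1P1P1 hp).not_gt h,
    fun _ x y z h => mem_amoebaP1P1P1_of_coshSum_eq h, fun hk => ?_⟩
  have hzero : coshSum 0 < |k| := coshSum_zero ▸ hk
  have hfrontier : frontier (holeP1P1P1 k) = {p | coshSum p = |k|} :=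
    convexOn_coshSum.frontier_setOf_lt continuous_coshSum hzero
  refine ⟨⟨0, hzero⟩, isBounded_holeP1P1P1 k,
    fun p hp => connectedComponentIn_compl_amoebaP1P1P1 hp, hfrontier, fun p hp => ?_⟩
  have hp : coshSum p = |k| := by rwa [hfrontier] at hp
  have hcosh : |k| / 2 - cosh p.2.1 - cosh p.2.2 = cosh p.1 := by
    rw [coshSum] at hp
    linarith
  rw [hcosh]
  exact exists_eq_log_abs_cosh_add_sqrt p.1
end

section
/- Let k be a real number and let P(z,w) = k − z − w − z^{-1}w^{-1} be the Newton polynomial of ℙ² (dP₀). For (x,y) ∈ ℝ²: (i) if e^x + e^y + e^{-x-y} < |k| then (x,y) does not belong to the amoeba of P; (ii) if k > 0 and e^x + e^y + e^{-x-y} = k then (x,y) belongs to the amoeba of P. In particular, for k > 3 the set {(x,y) : e^x + e^y + e^{-x-y} < k} is a nonempty bounded complement component (hole) of the amoeba of P. -/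
/-- The amoeba of the `ℙ² (dP₀)` Newton polynomial `P(z,w) = k - z - w - z⁻¹w⁻¹`. -/
def amoebaP2 (k : ℝ) : Set (ℝ × ℝ) :=
  {p | ∃ z w : ℂ, z ≠ 0 ∧ w ≠ 0 ∧ (k : ℂ) - z - w - z⁻¹ * w⁻¹ = 0 ∧
    Real.log ‖z‖ = p.1 ∧ Real.log ‖w‖ = p.2}

/-!
On the torus over `(x, y)` the monomials `z`, `w`, `z⁻¹w⁻¹` have moduli `eˣ`, `eʸ`, `e^{-x-y}`,
whose sum is `f(x, y)`. If `f < |k|` they cannot cancel `k` (triangle inequality), while on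
`f = k` the positive real point `(eˣ, eʸ)` is a root. As `f` is convex and continuous, `{f < k}`
is a convex set avoiding the amoeba; it is a whole component of the complement because, by the
intermediate value theorem, a connected set leaving it meets the level set `{f = k}`, which lies
in the amoeba.
-/

open Real Set

noncomputable def expSum (p : ℝ × ℝ) : ℝ := exp p.1 + exp p.2 + exp (-p.1 - p.2)

lemma continuous_expSum : Continuous expSum := by
  unfold expSum; fun_prop

lemma convexOn_expSum : ConvexOn ℝ univ expSum := by
  have h₁ := convexOn_exp.comp_linearMap (LinearMap.fst ℝ ℝ ℝ)
  have h₂ := convexOn_exp.comp_linearMap (LinearMap.snd ℝ ℝ ℝ)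
  have h₃ := convexOn_exp.comp_linearMap (-(LinearMap.fst ℝ ℝ ℝ + LinearMap.snd ℝ ℝ ℝ))
  have hsum : expSum = rexp ∘ LinearMap.fst ℝ ℝ ℝ + rexp ∘ LinearMap.snd ℝ ℝ ℝ +
      rexp ∘ (-(LinearMap.fst ℝ ℝ ℝ + LinearMap.snd ℝ ℝ ℝ)) := by
    ext p
    simp only [expSum, Pi.add_apply, Function.comp_apply, LinearMap.neg_apply,
      LinearMap.add_apply, LinearMap.fst_apply, LinearMap.snd_apply]
    ring_nf
  rw [hsum]
  exact (h₁.add h₂).add h₃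

lemma isBounded_setOf_expSum_lt (k : ℝ) : Bornology.IsBounded {p | expSum p < k} := by
  set L := log k
  refine ((Metric.isBounded_Icc (-2 * L) L).prod (Metric.isBounded_Icc (-2 * L) L)).subset ?_
  intro p hp
  simp only [mem_ofPred_eq, expSum] at hp
  have lt_L {t : ℝ} (ht : exp t < k) : t < L := by
    simpa only [log_exp] using log_lt_log (exp_pos t) ht
  have h₁ : p.1 < L := lt_L (by linarith [exp_pos p.2, exp_pos (-p.1 - p.2)])
  have h₂ : p.2 < L := lt_L (by linarith [exp_pos p.1, exp_pos (-p.1 - p.2)])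
  have h₃ : -p.1 - p.2 < L := lt_L (by linarith [exp_pos p.1, exp_pos p.2])
  exact ⟨⟨by linarith, h₁.le⟩, ⟨by linarith, h₂.le⟩⟩

lemma expSum_log_norm {z w : ℂ} (hz : z ≠ 0) (hw : w ≠ 0) :
    expSum (log ‖z‖, log ‖w‖) = ‖z‖ + ‖w‖ + ‖z⁻¹ * w⁻¹‖ := by
  have hz' : 0 < ‖z‖ := norm_pos_iff.2 hz
  have hw' : 0 < ‖w‖ := norm_pos_iff.2 hw
  rw [expSum, exp_log hz', exp_log hw', sub_eq_add_neg, exp_add, exp_neg, exp_neg, exp_log hz',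
    exp_log hw', norm_mul, norm_inv, norm_inv]

lemma notMem_amoebaP2_of_expSum_lt_abs {k : ℝ} {p : ℝ × ℝ} (h : expSum p < |k|) :
    p ∉ amoebaP2 k := by
  obtain ⟨x, y⟩ := p
  rintro ⟨z, w, hz, hw, hroot, rfl, rfl⟩
  have hk : (k : ℂ) = z + w + z⁻¹ * w⁻¹ := by linear_combination hroot
  have : |k| ≤ expSum (log ‖z‖, log ‖w‖) := by
    rw [expSum_log_norm hz hw, ← Real.norm_eq_abs, ← Complex.norm_real, hk]
    exact norm_add₃_le
  linarith

lemma mem_amoebaP2_of_expSum_eq {k : ℝ} {p : ℝ × ℝ} (h : expSum p = k) : p ∈ amoebaP2 k := by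
  have hroot : k - exp p.1 - exp p.2 - (exp p.1)⁻¹ * (exp p.2)⁻¹ = 0 := by
    rw [← h, expSum, ← exp_neg, ← exp_neg, ← exp_add]
    ring_nf
  refine ⟨exp p.1, exp p.2, by exact_mod_cast (exp_pos _).ne', by exact_mod_cast (exp_pos _).ne',
    by exact_mod_cast hroot, ?_, ?_⟩ <;>
  simp

lemma connectedComponentIn_eq_setOf_lt {X : Type*} [TopologicalSpace X] {f : X → ℝ}
    (hf : Continuous f) {S : Set X} {c : ℝ} (hsub : {x | f x < c} ⊆ S)
    (hS : ∀ x ∈ S, f x ≠ c) (hconn : IsPreconnected {x | f x < c}) {p : X} (hp : f p < c) :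
    connectedComponentIn S p = {x | f x < c} := by
  refine subset_antisymm (fun q hq => ?_) (hconn.subset_connectedComponentIn hp hsub)
  by_contra hq'
  obtain ⟨r, hr, hfr⟩ := isPreconnected_connectedComponentIn.intermediate_value
    (mem_connectedComponentIn (hsub hp)) hq hf.continuousOn ⟨hp.le, not_lt.1 hq'⟩
  exact hS r (connectedComponentIn_subset _ _ hr) hfr

/-- For `P(z,w) = k - z - w - z⁻¹w⁻¹`:
(i) points with `eˣ + eʸ + e^{-x-y} < |k|` are not in the amoeba;
(ii) if `k > 0`, points with `eˣ + eʸ + e^{-x-y} = k` are in the amoeba;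
and for `k > 3` the set `{eˣ + eʸ + e^{-x-y} < k}` is a nonempty bounded complement
component (hole) of the amoeba. -/
theorem amoeba_hole_P2 (k : ℝ) :
    (∀ x y : ℝ, Real.exp x + Real.exp y + Real.exp (-x - y) < |k| →
      (x, y) ∉ amoebaP2 k) ∧
    (0 < k → ∀ x y : ℝ, Real.exp x + Real.exp y + Real.exp (-x - y) = k →
      (x, y) ∈ amoebaP2 k) ∧
    (3 < k →
      ({p : ℝ × ℝ | Real.exp p.1 + Real.exp p.2 + Real.exp (-p.1 - p.2) < k}).Nonempty ∧
      Bornology.IsBounded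
        {p : ℝ × ℝ | Real.exp p.1 + Real.exp p.2 + Real.exp (-p.1 - p.2) < k} ∧
      ∀ p ∈ {p : ℝ × ℝ | Real.exp p.1 + Real.exp p.2 + Real.exp (-p.1 - p.2) < k},
        connectedComponentIn (amoebaP2 k)ᶜ p =
          {p : ℝ × ℝ | Real.exp p.1 + Real.exp p.2 + Real.exp (-p.1 - p.2) < k}) := by
  refine ⟨fun x y h => notMem_amoebaP2_of_expSum_lt_abs h,
    fun _ x y h => mem_amoebaP2_of_expSum_eq h, fun hk => ?_⟩
  have hsub : {p | expSum p < k} ⊆ (amoebaP2 k)ᶜ := fun p hp =>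
    notMem_amoebaP2_of_expSum_lt_abs (hp.trans_le (le_abs_self k))
  have hconv : Convex ℝ {p | expSum p < k} := by
    simpa only [mem_univ, true_and] using convexOn_expSum.convex_lt k
  refine ⟨⟨0, by norm_num [expSum]; linarith⟩, isBounded_setOf_expSum_lt k, fun p hp => ?_⟩
  exact connectedComponentIn_eq_setOf_lt continuous_expSum hsub
    (fun q hq hkq => hq (mem_amoebaP2_of_expSum_eq hkq)) hconv.isPreconnected hp
end

section
/- For every natural number n ≥ 1, the constant Laurent coefficient of (z + w + w^{-1} + z^{-1}w^{-1})^n, namely (2π)^{-2} ∫₀^{2π} ∫₀^{2π} (e^{iθ} + e^{iφ} + e^{-iφ} + e^{-i(θ+φ)})^n dθ dφ, equals Σ_{i} C(n,i) · C(i, i/2) · C(n−i, (2n−i)/4), where the sum runs over integers 0 ≤ i ≤ n such that i is even and 2n − i is divisible by 4, with the convention C(a,b) = 0 when b > a, and C denotes the binomial coefficient. -/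
/-!
Write `z = e^{iθ}`, `w = e^{iφ}` and group the integrand as `(z + (zw)⁻¹) + (w + w⁻¹)`.
Two binomial expansions turn its `n`-th power into the Laurent polynomial
`∑ C(n,i) C(i,a) C(n-i,b) z^(2a-i) w^(a+2b-n)`, and the torus average of `z^m w^k` is `1` if
`m = k = 0` and `0` otherwise. The surviving terms have `a = i/2` and `b = (2n-i)/4`, which
forces `i` even and `4 ∣ 2n - i`; when `b > n - i` the term is absent, matching `C(n-i,b) = 0`.
-/

open Complex Finset intervalIntegral
open scoped Real

theorem add_inv_pow_eq_sum {K : Type*} [Field K] (u v : K) (m : ℕ) :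
    (u + v⁻¹) ^ m = ∑ a ∈ range (m + 1), (m.choose a : K) * (u ^ a * v ^ ((a : ℤ) - m)) := by
  rw [add_pow]
  refine sum_congr rfl fun a ha => ?_
  have ham : a ≤ m := Nat.lt_succ_iff.mp (mem_range.mp ha)
  rw [inv_pow, ← zpow_natCast v, ← zpow_neg, Nat.cast_sub ham, neg_sub]
  ring

theorem dP1_pow_eq_sum {K : Type*} [Field K] {z w : K} (hz : z ≠ 0) (hw : w ≠ 0) (n : ℕ) :
    (z + w + w⁻¹ + (z * w)⁻¹) ^ n =
      ∑ i ∈ range (n + 1), ∑ a ∈ range (i + 1), ∑ b ∈ range (n - i + 1),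
        (n.choose i * i.choose a * (n - i).choose b : K) *
          (z ^ (2 * (a : ℤ) - i) * w ^ ((a : ℤ) + 2 * b - n)) := by
  rw [show z + w + w⁻¹ + (z * w)⁻¹ = (z + (z * w)⁻¹) + (w + w⁻¹) by ring, add_pow]
  refine sum_congr rfl fun i hi => ?_
  have hin : i ≤ n := Nat.lt_succ_iff.mp (mem_range.mp hi)
  rw [add_inv_pow_eq_sum, add_inv_pow_eq_sum, sum_mul_sum, sum_mul]
  refine sum_congr rfl fun a _ => ?_
  rw [sum_mul]
  refine sum_congr rfl fun b _ => ?_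
  have hmonomial : z ^ a * (z * w) ^ ((a : ℤ) - i) * (w ^ b * w ^ ((b : ℤ) - (n - i : ℕ))) =
      z ^ (2 * (a : ℤ) - i) * w ^ ((a : ℤ) + 2 * b - n) := by
    rw [show 2 * (a : ℤ) - i = a + (a - i) by ring,
      show (a : ℤ) + 2 * b - n = b + ((a - i) + (b - (n - i : ℕ))) by push_cast [hin]; ring,
      zpow_add₀ hz, zpow_add₀ hw, zpow_add₀ hw, zpow_natCast, zpow_natCast, mul_zpow]
    ring
  rw [← hmonomial]
  ring

theorem sum_choose_mul_ite_eq_sum_filter {R : Type*} [Semiring R] (n : ℕ) :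
    ∑ i ∈ range (n + 1), ∑ a ∈ range (i + 1), ∑ b ∈ range (n - i + 1),
        (n.choose i * i.choose a * (n - i).choose b : R) *
          (if 2 * (a : ℤ) - i = 0 ∧ (a : ℤ) + 2 * b - n = 0 then 1 else 0) =
      ∑ i ∈ (range (n + 1)).filter (fun i => 2 ∣ i ∧ 4 ∣ (2 * n - i)),
        (n.choose i * i.choose (i / 2) * (n - i).choose ((2 * n - i) / 4) : R) := by
  rw [sum_filter]
  refine sum_congr rfl fun i hi => ?_
  have hin : i ≤ n := Nat.lt_succ_iff.mp (mem_range.mp hi)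
  have hconstant : ∀ a b : ℕ, (2 * (a : ℤ) - i = 0 ∧ (a : ℤ) + 2 * b - n = 0) ↔
      (2 ∣ i ∧ 4 ∣ 2 * n - i) ∧ a = i / 2 ∧ b = (2 * n - i) / 4 := by
    intro a b
    omega
  simp only [hconstant]
  by_cases hdvd : 2 ∣ i ∧ 4 ∣ 2 * n - i
  · simp only [hdvd, true_and, if_true, mul_ite, mul_one, mul_zero, ite_and]
    rw [sum_eq_single_of_mem (i / 2) (by simp; omega) fun a _ ha => by simp [ha]]
    simp only [if_true, sum_ite_eq', ite_eq_left_iff]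
    intro hb
    have hlt : n - i < (2 * n - i) / 4 := by simpa using hb
    rw [Nat.choose_eq_zero_of_lt hlt, Nat.cast_zero, mul_zero]
  · simp [hdvd]

noncomputable def torusAverage (f : ℝ → ℝ → ℂ) : ℂ :=
  (1 : ℂ) / (2 * π) ^ 2 * ∫ θ in (0 : ℝ)..(2 * π), ∫ φ in (0 : ℝ)..(2 * π), f θ φ

theorem integral_exp_mul_I_zpow (m : ℤ) :
    ∫ x in (0 : ℝ)..(2 * π), cexp (I * x) ^ m = if m = 0 then 2 * π else 0 := by
  split_ifs with hm
  · simp [hm]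
  · have hc : (m : ℂ) * I ≠ 0 := by simp [hm]
    simp_rw [← exp_int_mul, ← mul_assoc]
    rw [integral_exp_mul_complex hc]
    push_cast
    rw [show (m : ℂ) * I * (2 * π) = m * (2 * π * I) by ring, exp_int_mul_two_pi_mul_I]
    simp

theorem torusAverage_const_mul (c : ℂ) (f : ℝ → ℝ → ℂ) :
    torusAverage (fun θ φ => c * f θ φ) = c * torusAverage f := by
  simp only [torusAverage, integral_const_mul]
  ring

theorem torusAverage_zpow_mul_zpow (m k : ℤ) :
    torusAverage (fun θ φ => cexp (I * θ) ^ m * cexp (I * φ) ^ k) =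
      if m = 0 ∧ k = 0 then 1 else 0 := by
  have hπ : (π : ℂ) ≠ 0 := ofReal_ne_zero.mpr Real.pi_ne_zero
  simp only [torusAverage, integral_const_mul, integral_mul_const, integral_exp_mul_I_zpow]
  by_cases hm : m = 0 <;> by_cases hk : k = 0 <;> simp [hm, hk]
  field_simp

theorem torusAverage_finset_sum {ι : Type*} (s : Finset ι) (f : ι → ℝ → ℝ → ℂ)
    (hf : ∀ j ∈ s, Continuous fun p : ℝ × ℝ => f j p.1 p.2) :
    torusAverage (fun θ φ => ∑ j ∈ s, f j θ φ) = ∑ j ∈ s, torusAverage (f j) := by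
  have hφ : ∀ θ, ∀ j ∈ s, IntervalIntegrable (f j θ) MeasureTheory.volume 0 (2 * π) :=
    fun θ j hj => ((hf j hj).uncurry_left θ).intervalIntegrable _ _
  have hθ : ∀ j ∈ s, IntervalIntegrable (fun θ => ∫ φ in (0 : ℝ)..(2 * π), f j θ φ)
      MeasureTheory.volume 0 (2 * π) := fun j hj =>
    (continuous_parametric_intervalIntegral_of_continuous' (hf j hj) _ _).intervalIntegrable _ _
  simp only [torusAverage, integral_finsetSum (hφ _), integral_finsetSum hθ, mul_sum]

theorem constant_term_dP1_general (n : ℕ) :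
    ((1 : ℂ) / (2 * Real.pi) ^ 2) *
        (∫ θ in (0 : ℝ)..(2 * Real.pi), ∫ φ in (0 : ℝ)..(2 * Real.pi),
          (Complex.exp (Complex.I * (θ : ℂ)) + Complex.exp (Complex.I * (φ : ℂ)) +
            Complex.exp (-(Complex.I * (φ : ℂ))) +
            Complex.exp (-(Complex.I * ((θ : ℂ) + (φ : ℂ))))) ^ n)
      = ∑ i ∈ (Finset.range (n + 1)).filter (fun i => 2 ∣ i ∧ 4 ∣ (2 * n - i)),
          (Nat.choose n i : ℂ) * (Nat.choose i (i / 2) : ℂ) *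
            (Nat.choose (n - i) ((2 * n - i) / 4) : ℂ) := by
  have hexpand : (fun θ φ : ℝ => (cexp (I * θ) + cexp (I * φ) + cexp (-(I * φ)) +
      cexp (-(I * (θ + φ)))) ^ n) = fun θ φ : ℝ =>
        ∑ i ∈ range (n + 1), ∑ a ∈ range (i + 1), ∑ b ∈ range (n - i + 1),
          (n.choose i * i.choose a * (n - i).choose b : ℂ) *
            (cexp (I * θ) ^ (2 * (a : ℤ) - i) * cexp (I * φ) ^ ((a : ℤ) + 2 * b - n)) := by
    funext θ φ
    rw [← dP1_pow_eq_sum (exp_ne_zero _) (exp_ne_zero _), mul_add, exp_neg, exp_neg, exp_add]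
  change torusAverage _ = _
  rw [hexpand]
  simp (disch := intro j _; fun_prop (disch := simp)) only
    [torusAverage_finset_sum, torusAverage_const_mul, torusAverage_zpow_mul_zpow]
  exact sum_choose_mul_ite_eq_sum_filter n

/-- The constant Laurent coefficient of `(z + w + w⁻¹ + z⁻¹w⁻¹)ⁿ`, computed as a torus
average, equals `∑ᵢ C(n,i) C(i,i/2) C(n−i,(2n−i)/4)`, the sum running over `0 ≤ i ≤ n`
with `i` even and `2n − i` divisible by `4` (`C(a,b) = 0` when `b > a`). -/
theorem constant_term_dP1 (n : ℕ) (hn : 1 ≤ n) :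
    ((1 : ℂ) / (2 * Real.pi) ^ 2) *
        (∫ θ in (0 : ℝ)..(2 * Real.pi), ∫ φ in (0 : ℝ)..(2 * Real.pi),
          (Complex.exp (Complex.I * (θ : ℂ)) + Complex.exp (Complex.I * (φ : ℂ)) +
            Complex.exp (-(Complex.I * (φ : ℂ))) +
            Complex.exp (-(Complex.I * ((θ : ℂ) + (φ : ℂ))))) ^ n)
      = ∑ i ∈ (Finset.range (n + 1)).filter (fun i => 2 ∣ i ∧ 4 ∣ (2 * n - i)),
          (Nat.choose n i : ℂ) * (Nat.choose i (i / 2) : ℂ) *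
            (Nat.choose (n - i) ((2 * n - i) / 4) : ℂ) :=
  constant_term_dP1_general n
end
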